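/- Let (l,ω) ∈ (0,π)×(−π/2,π/2) with (l,ω) ≠ (π/2,0). For every r ∈ (0,π/2), the value h(r) = ⟨β₊(r), β₋(r)⟩ lies in (−1,1); setting w(r) = (β₋(r) − h(r)·β₊(r))/√(1 − h(r)²) (the unit initial velocity at β₊(r) of the great-circle arc from β₊(r) to β₋(r)) and β₊'(r) = −sin(r)·z₊ + cos(r)·u₊, one has ⟨β₊'(r), w(r)⟩ = 0 if and only if r = r̄ := arctan(cos(ω)/sin(l)). Moreover, r̄ satisfies sin(2r̄)·(cos(2l) + cos(2ω)) = −4·sin(l)·cos(ω)·cos(2r̄). -/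

import Mathlib

open Real

noncomputable def dot4 (p q : Fin 4 → ℝ) : ℝ := ∑ m, p m * q m

noncomputable def vE : Fin 4 → ℝ := ![1, 0, 0, 0]
noncomputable def vI : Fin 4 → ℝ := ![0, 1, 0, 0]
noncomputable def vJ : Fin 4 → ℝ := ![0, 0, 1, 0]
noncomputable def vK : Fin 4 → ℝ := ![0, 0, 0, 1]
noncomputable def vP : Fin 4 → ℝ := ![1 / Real.sqrt 2, 1 / Real.sqrt 2, 0, 0]
noncomputable def vM : Fin 4 → ℝ := ![1 / Real.sqrt 2, -(1 / Real.sqrt 2), 0, 0]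

noncomputable def zP (l : ℝ) : Fin 4 → ℝ := Real.cos l • vK + Real.sin l • vP
noncomputable def zM (l : ℝ) : Fin 4 → ℝ := Real.cos l • vK + Real.sin l • vM
noncomputable def uP (ω : ℝ) : Fin 4 → ℝ := Real.sin ω • vJ - Real.cos ω • vM
noncomputable def uM (ω : ℝ) : Fin 4 → ℝ := Real.sin ω • vJ - Real.cos ω • vP

/-- The geodesic edge `β₊` of the pentagon, `β₊(r) = cos r · z₊ + sin r · u₊`. -/
noncomputable def betaP (l ω r : ℝ) : Fin 4 → ℝ := Real.cos r • zP l + Real.sin r • uP ω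

/-- The geodesic edge `β₋` of the pentagon, `β₋(r) = cos r · z₋ + sin r · u₋`. -/
noncomputable def betaM (l ω r : ℝ) : Fin 4 → ℝ := Real.cos r • zM l + Real.sin r • uM ω

/-! Expanding in coordinates, with `b = sin l cos r + cos ω sin r`,
`⟨β₊, β₋⟩ = 1 - b²`, `⟨β₊', β₊⟩ = 0` and `⟨β₊', β₋⟩ = -b (cos ω cos r - sin l sin r)`.
Cauchy–Schwarz gives `b² ≤ sin² l + cos² ω < 2` away from `(π/2, 0)`, so `h ∈ (-1, 1)`, and
since `b > 0` the orthogonality reduces to `sin l sin r = cos ω cos r`, i.e. `tan r = tan r̄`.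
The identity for `r̄` is then a polynomial consequence of `sin l sin r̄ = cos ω cos r̄`. -/

theorem mul_sin_arctan_div {a : ℝ} (b : ℝ) (ha : a ≠ 0) :
    a * sin (arctan (b / a)) = b * cos (arctan (b / a)) := by
  rw [sin_arctan, cos_arctan]
  field_simp

theorem eq_arctan_div_iff {a b r : ℝ} (ha : a ≠ 0) (hr : r ∈ Set.Ioo (-(π / 2)) (π / 2)) :
    r = arctan (b / a) ↔ a * sin r = b * cos r := by
  constructor
  · rintro rfl
    exact mul_sin_arctan_div b ha
  · intro h
    have hcos : cos r ≠ 0 := (cos_pos_of_mem_Ioo hr).ne'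
    have htan : tan r = b / a := by
      rw [tan_eq_sin_div_cos, div_eq_div_iff hcos ha]
      linear_combination h
    rw [← htan, arctan_tan hr.1 hr.2]

theorem sin_two_mul_mul_sub_sq {a b r : ℝ} (h : a * sin r = b * cos r) :
    sin (2 * r) * (b ^ 2 - a ^ 2) = -2 * a * b * cos (2 * r) := by
  rw [sin_two_mul, cos_two_mul']
  linear_combination (-2 * a * cos r - 2 * b * sin r) * h

theorem sq_mul_add_mul_le (a c s t : ℝ) :
    (a * t + c * s) ^ 2 ≤ (a ^ 2 + c ^ 2) * (s ^ 2 + t ^ 2) := by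
  nlinarith [sq_nonneg (a * s - c * t)]

theorem cos_ne_zero_or_sin_ne_zero {l ω : ℝ} (hl : l ∈ Set.Ioo 0 π)
    (hω : ω ∈ Set.Ioo (-(π / 2)) (π / 2)) (hne : (l, ω) ≠ (π / 2, 0)) :
    cos l ≠ 0 ∨ sin ω ≠ 0 := by
  by_contra! h
  have hl' : l = π / 2 :=
    injOn_cos ⟨hl.1.le, hl.2.le⟩ ⟨by positivity, by linarith [pi_pos]⟩
      (h.1.trans cos_pi_div_two.symm)
  have hω' : ω = 0 :=
    (sin_eq_zero_iff_of_lt_of_lt (by linarith [hω.1, pi_pos]) (by linarith [hω.2, pi_pos])).1 h.2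
  exact hne (by rw [hl', hω'])

theorem dot4_smul_right (c : ℝ) (p q : Fin 4 → ℝ) : dot4 p (c • q) = c • dot4 p q :=
  dotProduct_smul c p q

theorem dot4_sub_right (p q q' : Fin 4 → ℝ) : dot4 p (q - q') = dot4 p q - dot4 p q' :=
  dotProduct_sub p q q'

theorem inv_sqrt_two_mul_self : (√2)⁻¹ * (√2)⁻¹ = 1 / 2 := by
  rw [← mul_inv, mul_self_sqrt zero_le_two, one_div]

theorem dot4_betaP_betaM (l ω r : ℝ) :
    dot4 (betaP l ω r) (betaM l ω r) = 1 - (sin l * cos r + cos ω * sin r) ^ 2 := by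
  simp only [dot4, betaP, betaM, zP, zM, uP, uM, vP, vM, vJ, vK, Fin.sum_univ_four,
    Pi.add_apply, Pi.sub_apply, Pi.smul_apply, Matrix.cons_val_zero, Matrix.cons_val_one,
    Matrix.cons_val_two, Matrix.cons_val_three, Matrix.head_cons, Matrix.tail_cons,
    smul_eq_mul, one_div]
  linear_combination cos r ^ 2 * sin_sq_add_cos_sq l + sin r ^ 2 * sin_sq_add_cos_sq ω +
    sin_sq_add_cos_sq r - 4 * sin r * cos r * sin l * cos ω * inv_sqrt_two_mul_self

theorem dot4_deriv_betaP_betaP (l ω r : ℝ) :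
    dot4 ((-sin r) • zP l + cos r • uP ω) (betaP l ω r) = 0 := by
  simp only [dot4, betaP, zP, uP, vP, vM, vJ, vK, Fin.sum_univ_four,
    Pi.add_apply, Pi.sub_apply, Pi.smul_apply, Matrix.cons_val_zero, Matrix.cons_val_one,
    Matrix.cons_val_two, Matrix.cons_val_three, Matrix.head_cons, Matrix.tail_cons,
    smul_eq_mul, one_div]
  linear_combination -sin r * cos r * sin_sq_add_cos_sq l + sin r * cos r * sin_sq_add_cos_sq ω +
    2 * sin r * cos r * (cos ω ^ 2 - sin l ^ 2) * inv_sqrt_two_mul_self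

theorem dot4_deriv_betaP_betaM (l ω r : ℝ) :
    dot4 ((-sin r) • zP l + cos r • uP ω) (betaM l ω r) =
      -((sin l * cos r + cos ω * sin r) * (cos ω * cos r - sin l * sin r)) := by
  simp only [dot4, betaM, zP, zM, uP, uM, vP, vM, vJ, vK, Fin.sum_univ_four,
    Pi.add_apply, Pi.sub_apply, Pi.smul_apply, Matrix.cons_val_zero, Matrix.cons_val_one,
    Matrix.cons_val_two, Matrix.cons_val_three, Matrix.head_cons, Matrix.tail_cons,
    smul_eq_mul, one_div]
  linear_combination -sin r * cos r * sin_sq_add_cos_sq l + sin r * cos r * sin_sq_add_cos_sq ω +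
    2 * sin l * cos ω * (sin r ^ 2 - cos r ^ 2) * inv_sqrt_two_mul_self

theorem sin_mul_cos_add_cos_mul_sin_pos {l ω r : ℝ} (hl : l ∈ Set.Ioo 0 π)
    (hω : ω ∈ Set.Ioo (-(π / 2)) (π / 2)) (hr : r ∈ Set.Ioo 0 (π / 2)) :
    0 < sin l * cos r + cos ω * sin r := by
  have := sin_pos_of_pos_of_lt_pi hl.1 hl.2
  have := cos_pos_of_mem_Ioo hω
  have := cos_pos_of_mem_Ioo ⟨by linarith [hr.1, pi_pos], hr.2⟩
  have := sin_pos_of_pos_of_lt_pi hr.1 (by linarith [hr.2, pi_pos])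
  positivity

theorem dot4_betaP_betaM_mem_Ioo {l ω r : ℝ} (hl : l ∈ Set.Ioo 0 π)
    (hω : ω ∈ Set.Ioo (-(π / 2)) (π / 2)) (hne : (l, ω) ≠ (π / 2, 0))
    (hr : r ∈ Set.Ioo 0 (π / 2)) :
    dot4 (betaP l ω r) (betaM l ω r) ∈ Set.Ioo (-1 : ℝ) 1 := by
  have hb_pos := sin_mul_cos_add_cos_mul_sin_pos hl hω hr
  have hb_lt : (sin l * cos r + cos ω * sin r) ^ 2 < 2 := by
    have hsum : 0 < cos l ^ 2 + sin ω ^ 2 := by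
      rcases cos_ne_zero_or_sin_ne_zero hl hω hne with h | h <;> positivity
    have := sq_mul_add_mul_le (sin l) (cos ω) (sin r) (cos r)
    rw [sin_sq_add_cos_sq r] at this
    linarith [sin_sq_add_cos_sq l, sin_sq_add_cos_sq ω]
  rw [dot4_betaP_betaM]
  constructor <;> nlinarith

theorem dot4_deriv_betaP_arcVelocity_eq_zero_iff {l ω r : ℝ}
    (hh : dot4 (betaP l ω r) (betaM l ω r) ∈ Set.Ioo (-1 : ℝ) 1)
    (hb : sin l * cos r + cos ω * sin r ≠ 0) :
    dot4 ((-sin r) • zP l + cos r • uP ω)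
        ((√(1 - dot4 (betaP l ω r) (betaM l ω r) ^ 2))⁻¹ •
          (betaM l ω r - dot4 (betaP l ω r) (betaM l ω r) • betaP l ω r)) = 0 ↔
      sin l * sin r = cos ω * cos r := by
  have hnorm : (√(1 - dot4 (betaP l ω r) (betaM l ω r) ^ 2))⁻¹ ≠ 0 := by
    have : dot4 (betaP l ω r) (betaM l ω r) ^ 2 < 1 := by nlinarith [hh.1, hh.2]
    exact inv_ne_zero (sqrt_pos.2 (by linarith)).ne'
  rw [dot4_smul_right, dot4_sub_right, dot4_smul_right, dot4_deriv_betaP_betaM,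
    dot4_deriv_betaP_betaP, smul_zero, sub_zero, smul_eq_mul, mul_eq_zero, or_iff_right hnorm, neg_eq_zero, mul_eq_zero, or_iff_right hb, sub_eq_zero,
    eq_comm, mul_comm (cos ω)]

/-- for `r ∈ (0,π/2)`, `h(r) = ⟨β₊(r),β₋(r)⟩ ∈ (−1,1)`; the initial velocity
`w(r)` of the great-circle arc from `β₊(r)` to `β₋(r)` is orthogonal to `β₊'(r)` iff
`r = r̄ = arctan(cos ω / sin l)`; moreover `r̄` satisfies
`sin(2r̄)(cos 2l + cos 2ω) = −4 sin l cos ω cos(2r̄)`. -/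
theorem stmt5 (l ω : ℝ) (hl : l ∈ Set.Ioo 0 π) (hω : ω ∈ Set.Ioo (-(π/2)) (π/2))
    (hne : (l, ω) ≠ (π/2, 0)) :
    (∀ r ∈ Set.Ioo (0:ℝ) (π/2),
      dot4 (betaP l ω r) (betaM l ω r) ∈ Set.Ioo (-1 : ℝ) 1 ∧
      (dot4 ((-Real.sin r) • zP l + Real.cos r • uP ω)
          ((Real.sqrt (1 - (dot4 (betaP l ω r) (betaM l ω r))^2))⁻¹ •
            (betaM l ω r - dot4 (betaP l ω r) (betaM l ω r) • betaP l ω r)) = 0 ↔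
        r = Real.arctan (Real.cos ω / Real.sin l))) ∧
    Real.sin (2 * Real.arctan (Real.cos ω / Real.sin l)) *
        (Real.cos (2*l) + Real.cos (2*ω)) =
      -4 * Real.sin l * Real.cos ω *
        Real.cos (2 * Real.arctan (Real.cos ω / Real.sin l)) := by
  have hsl : sin l ≠ 0 := (sin_pos_of_pos_of_lt_pi hl.1 hl.2).ne'
  refine ⟨fun r hr => ?_, ?_⟩
  · have hh := dot4_betaP_betaM_mem_Ioo hl hω hne hr
    rw [dot4_deriv_betaP_arcVelocity_eq_zero_iff hh
        (sin_mul_cos_add_cos_mul_sin_pos hl hω hr).ne',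
      eq_arctan_div_iff hsl ⟨by linarith [hr.1, pi_pos], hr.2⟩]
    exact ⟨hh, Iff.rfl⟩
  · have := sin_two_mul_mul_sub_sq (mul_sin_arctan_div (cos ω) hsl)
    rw [cos_two_mul', cos_two_mul']
    linear_combination 2 * this + sin (2 * arctan (cos ω / sin l)) *
      (sin_sq_add_cos_sq l - sin_sq_add_cos_sq ω)
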